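/- Let V_1,…,V_K be nonempty pairwise disjoint subsets of {1,…,N} with union V, let P = {V_1,…,V_K}, let c ∈ ℝ^N have strictly positive entries, and let τ ∈ [0,1]. Suppose ρ(P,c) ≥ τ, and suppose a_k ∈ 𝔸_{V_k} satisfies N^eff(a_k,c) ≥ (τ/ρ(P,c))·|V_k| for each k ∈ {1,…,K}. Then a = ∑_{k=1}^K a_k satisfies N^eff(a,c) ≥ τ|V|. -/

import Mathlib

/-!
Block-diagonality makes `N^eff` of `a = ∑ aₖ` equal to `(∑ₖ Sₖ)² / ∑ₖ Dₖ`, where `Sₖ = ∑_{j ∈ Vₖ} cʲ`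
is the common row-weight total of `aₖ` and `Dₖ` its sum of squared row weights. The hypothesis on
`aₖ` reads `Dₖ ≤ (ρ/τ) Sₖ² / |Vₖ|`; summing over `k` and using `ρ = (∑ₖ Sₖ)² / (|V| ∑ₖ Sₖ²/|Vₖ|)`
gives `∑ₖ Dₖ ≤ (∑ₖ Sₖ)² / (τ |V|)`, which is the claim.
-/

open Finset

/-- The effective sample size `N^eff(a, c)` of an `N × N` matrix. -/
noncomputable def Neff {N : ℕ} (a : Matrix (Fin N) (Fin N) ℝ) (c : Fin N → ℝ) : ℝ :=
  (∑ i, ∑ j, a i j * c j) ^ 2 / (∑ i, (∑ j, a i j * c j) ^ 2)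

/-- The partition effective sample size `N^eff(P, c)` for `P = {V_1, …, V_K}`. -/
noncomputable def NeffP {N K : ℕ} (Vs : Fin K → Finset (Fin N)) (c : Fin N → ℝ) : ℝ :=
  (∑ k, ∑ j ∈ Vs k, c j) ^ 2 / (∑ k, ((Vs k).card : ℝ)⁻¹ * (∑ j ∈ Vs k, c j) ^ 2)

/-- Membership in 𝔸_V. -/
def memA {N : ℕ} (V : Finset (Fin N)) (a : Matrix (Fin N) (Fin N) ℝ) : Prop :=
  (∀ i j, 0 ≤ a i j) ∧
  (∀ i j, (i ∉ V ∨ j ∉ V) → a i j = 0) ∧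
  (∀ i ∈ V, ∑ j, a i j = 1) ∧
  (∀ j ∈ V, ∑ i, a i j = 1)

/-- ρ(P, c) = N^eff(P, c) / |V|, where V is the union of the blocks of P. -/
noncomputable def rhoP {N K : ℕ} (Vs : Fin K → Finset (Fin N)) (c : Fin N → ℝ) : ℝ :=
  NeffP Vs c / ((Finset.univ.biUnion Vs).card : ℝ)

open Matrix

theorem Finset.sq_sum_eq_sum_sq_of_mul_eq_zero {ι R : Type*} [CommSemiring R] (s : Finset ι)
    (f : ι → R) (h : ∀ k ∈ s, ∀ l ∈ s, k ≠ l → f k * f l = 0) :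
    (∑ k ∈ s, f k) ^ 2 = ∑ k ∈ s, f k ^ 2 := by
  rw [sq, sum_mul_sum]
  refine sum_congr rfl fun k hk => ?_
  rw [sum_eq_single_of_mem k hk fun l hl hlk => h k hk l hl hlk.symm, sq]

theorem Finset.sum_sq_pos_of_sum_ne_zero {ι : Type*} {s : Finset ι} {x : ι → ℝ}
    (h : ∑ i ∈ s, x i ≠ 0) : 0 < ∑ i ∈ s, x i ^ 2 := by
  obtain ⟨i, hi, hxi⟩ := exists_ne_zero_of_sum_ne_zero h
  exact sum_pos' (fun _ _ => sq_nonneg _) ⟨i, hi, sq_pos_of_ne_zero hxi⟩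

theorem le_inv_mul_inv_mul_sq_of_mul_le_sq_div {t n s d : ℝ} (ht : 0 < t) (hn : 0 ≤ n)
    (hd : 0 ≤ d) (hnd : n = 0 → d = 0) (h : t * n ≤ s ^ 2 / d) : d ≤ t⁻¹ * (n⁻¹ * s ^ 2) := by
  rcases hd.eq_or_lt with rfl | hd
  · positivity
  have hn : 0 < n := hn.lt_of_ne fun hn0 => hd.ne' (hnd hn0.symm)
  rw [le_div_iff₀ hd] at h
  calc d = (t * n)⁻¹ * (t * n * d) := by field_simp
    _ ≤ (t * n)⁻¹ * s ^ 2 := by gcongr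
    _ = t⁻¹ * (n⁻¹ * s ^ 2) := by rw [mul_inv, mul_assoc]

theorem Neff_eq_mulVec {N : ℕ} (a : Matrix (Fin N) (Fin N) ℝ) (c : Fin N → ℝ) :
    Neff a c = (∑ i, (a *ᵥ c) i) ^ 2 / ∑ i, (a *ᵥ c) i ^ 2 :=
  rfl

theorem Neff_nonneg {N : ℕ} (a : Matrix (Fin N) (Fin N) ℝ) (c : Fin N → ℝ) : 0 ≤ Neff a c := by
  unfold Neff
  positivity

namespace memA

variable {N : ℕ} {V : Finset (Fin N)} {a : Matrix (Fin N) (Fin N) ℝ}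

theorem mulVec_eq_zero_of_notMem (ha : memA V a) (c : Fin N → ℝ) {i : Fin N} (hi : i ∉ V) :
    (a *ᵥ c) i = 0 :=
  (sum_eq_zero fun j _ => by rw [ha.2.1 i j (Or.inl hi), zero_mul] : ∑ j, a i j * c j = 0)

theorem sum_mulVec (ha : memA V a) (c : Fin N → ℝ) : ∑ i, (a *ᵥ c) i = ∑ j ∈ V, c j := by
  calc ∑ i, (a *ᵥ c) i = ∑ j, (∑ i, a i j) * c j := by
        simp only [mulVec, dotProduct, sum_mul]
        exact sum_comm
    _ = ∑ j ∈ V, c j := by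
        rw [← sum_subset (subset_univ V) fun j _ hj => by
          rw [sum_eq_zero fun i _ => ha.2.1 i j (Or.inr hj), zero_mul]]
        exact sum_congr rfl fun j hj => by rw [ha.2.2.2 j hj, one_mul]

theorem Neff_eq (ha : memA V a) (c : Fin N → ℝ) :
    Neff a c = (∑ j ∈ V, c j) ^ 2 / ∑ i, (a *ᵥ c) i ^ 2 := by
  rw [Neff_eq_mulVec, ha.sum_mulVec]

end memA

section Blocks

variable {N K : ℕ} {Vs : Fin K → Finset (Fin N)} {A : Fin K → Matrix (Fin N) (Fin N) ℝ}

theorem sum_mulVec_blockSum (hA : ∀ k, memA (Vs k) (A k)) (c : Fin N → ℝ) :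
    ∑ i, ((∑ k, A k) *ᵥ c) i = ∑ k, ∑ j ∈ Vs k, c j := by
  simp only [Matrix.sum_mulVec, Finset.sum_apply]
  rw [sum_comm]
  exact sum_congr rfl fun k _ => (hA k).sum_mulVec c

theorem sum_sq_mulVec_blockSum (hdisj : ∀ k l, k ≠ l → Disjoint (Vs k) (Vs l))
    (hA : ∀ k, memA (Vs k) (A k)) (c : Fin N → ℝ) :
    ∑ i, ((∑ k, A k) *ᵥ c) i ^ 2 = ∑ k, ∑ i, (A k *ᵥ c) i ^ 2 := by
  simp only [Matrix.sum_mulVec, Finset.sum_apply]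
  rw [← sum_comm]
  refine sum_congr rfl fun i _ => sq_sum_eq_sum_sq_of_mul_eq_zero _ _ fun k _ l _ hkl => ?_
  by_cases hi : i ∈ Vs k
  · rw [(hA l).mulVec_eq_zero_of_notMem c (disjoint_left.mp (hdisj k l hkl) hi), mul_zero]
  · rw [(hA k).mulVec_eq_zero_of_notMem c hi, zero_mul]

end Blocks

theorem sum_le_inv_mul_sum_of_mul_le_sq_div {ι : Type*} [Fintype ι] {t : ℝ} {n S D : ι → ℝ}
    (ht : 0 < t) (hn : ∀ k, 0 ≤ n k) (hD : ∀ k, 0 ≤ D k) (hnD : ∀ k, n k = 0 → D k = 0)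
    (h : ∀ k, t * n k ≤ S k ^ 2 / D k) : ∑ k, D k ≤ t⁻¹ * ∑ k, (n k)⁻¹ * S k ^ 2 := by
  rw [mul_sum]
  exact sum_le_sum fun k _ =>
    le_inv_mul_inv_mul_sq_of_mul_le_sq_div ht (hn k) (hD k) (hnD k) (h k)

theorem stmt_11_general {N K : ℕ}
    (Vs : Fin K → Finset (Fin N))
    (hdisj : ∀ k l, k ≠ l → Disjoint (Vs k) (Vs l))
    (c : Fin N → ℝ)
    (τ : ℝ)
    (hρ : τ ≤ rhoP Vs c)
    (A : Fin K → Matrix (Fin N) (Fin N) ℝ) (hA : ∀ k, memA (Vs k) (A k))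
    (hAess : ∀ k, (τ / rhoP Vs c) * ((Vs k).card : ℝ) ≤ Neff (A k) c) :
    τ * (((Finset.univ.biUnion Vs).card : ℝ)) ≤ Neff (∑ k, A k) c := by
  rcases le_or_gt τ 0 with hτ | hτ
  · exact (mul_nonpos_of_nonpos_of_nonneg hτ (Nat.cast_nonneg _)).trans (Neff_nonneg _ _)
  set S : ℝ := ∑ k, ∑ j ∈ Vs k, c j
  set T : ℝ := ∑ k, ((Vs k).card : ℝ)⁻¹ * (∑ j ∈ Vs k, c j) ^ 2
  set V : ℝ := ((univ.biUnion Vs).card : ℝ)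
  have hρ_eq : rhoP Vs c = S ^ 2 / T / V := rfl
  have hρ_pos : 0 < rhoP Vs c := hτ.trans_le hρ
  obtain ⟨⟨hS, hT⟩, hV⟩ : (S ^ 2 ≠ 0 ∧ T ≠ 0) ∧ V ≠ 0 := by
    rw [← div_ne_zero_iff, ← div_ne_zero_iff, ← hρ_eq]
    exact hρ_pos.ne'
  have hD : ∑ k, ∑ i, (A k *ᵥ c) i ^ 2 ≤ (τ / rhoP Vs c)⁻¹ * T :=
    sum_le_inv_mul_sum_of_mul_le_sq_div (div_pos hτ hρ_pos) (fun _ => Nat.cast_nonneg _)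
      (fun _ => by positivity)
      (fun k hk => sum_eq_zero fun i _ => by
        rw [(hA k).mulVec_eq_zero_of_notMem c
          (card_eq_zero.mp (Nat.cast_eq_zero.mp hk) ▸ notMem_empty i), zero_pow two_ne_zero])
      (fun k => (hA k).Neff_eq c ▸ hAess k)
  have hD_eq : (τ / rhoP Vs c)⁻¹ * T = S ^ 2 / (τ * V) := by
    rw [hρ_eq]
    field_simp
  have hD_pos : 0 < ∑ k, ∑ i, (A k *ᵥ c) i ^ 2 := by
    rw [← sum_sq_mulVec_blockSum hdisj hA]
    exact sum_sq_pos_of_sum_ne_zero ((sum_mulVec_blockSum hA c).symm ▸ ne_zero_pow two_ne_zero hS)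
  rw [Neff_eq_mulVec, sum_mulVec_blockSum hA, sum_sq_mulVec_blockSum hdisj hA]
  calc τ * V = S ^ 2 / (S ^ 2 / (τ * V)) := (div_div_cancel₀ hS).symm
    _ ≤ S ^ 2 / ∑ k, ∑ i, (A k *ᵥ c) i ^ 2 :=
        div_le_div_of_nonneg_left (sq_nonneg _) hD_pos (hD_eq ▸ hD)

theorem stmt_11 {N K : ℕ} (hN : 1 ≤ N)
    (Vs : Fin K → Finset (Fin N))
    (hne : ∀ k, (Vs k).Nonempty)
    (hdisj : ∀ k l, k ≠ l → Disjoint (Vs k) (Vs l))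
    (c : Fin N → ℝ) (hc : ∀ j, 0 < c j)
    (τ : ℝ) (hτ0 : 0 ≤ τ) (hτ1 : τ ≤ 1)
    (hρ : τ ≤ rhoP Vs c)
    (A : Fin K → Matrix (Fin N) (Fin N) ℝ) (hA : ∀ k, memA (Vs k) (A k))
    (hAess : ∀ k, (τ / rhoP Vs c) * ((Vs k).card : ℝ) ≤ Neff (A k) c) :
    τ * (((Finset.univ.biUnion Vs).card : ℝ)) ≤ Neff (∑ k, A k) c :=
  stmt_11_general Vs hdisj c τ hρ A hA hAess
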